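/- arXiv:1912.01510 — 5 statements merged into one kernel-verified Lean document; each statement's English description precedes it below -/
import Mathlib

section
/- For all natural numbers n ≥ 3 and all i with 0 ≤ i ≤ n−3, one has 1 + Σ_{s=1}^{i+1} ( C(n−s−1, i−s+2) + s·C(n−s−2, i−s+1) ) = C(n, i+1), where C(a,b) denotes the binomial coefficient. -/
lemma hs1 (m r : ℕ) :
    1 + ∑ j ∈ Finset.range (r + 1), Nat.choose (m + 1 + j) (j + 1)
      = Nat.choose (m + r + 2) (r + 1) := by
  induction r with
  | zero => simp [Nat.choose_one_right]; omega
  | succ r ih =>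
      rw [Finset.sum_range_succ, ← Nat.add_assoc, ih,
        show m + 1 + (r + 1) = m + r + 2 by omega,
        show m + (r + 1) + 2 = (m + r + 2) + 1 by omega]
      exact (Nat.choose_succ_succ _ _).symm

lemma hs2 (m r : ℕ) :
    ∑ j ∈ Finset.range (r + 1), Nat.choose (m + j) j = Nat.choose (m + r + 1) r := by
  induction r with
  | zero => simp
  | succ r ih =>
      rw [Finset.sum_range_succ, ih,
        show m + (r + 1) = m + r + 1 by omega]
      exact (Nat.choose_succ_succ _ _).symm

lemma L2 (m i : ℕ) :
    ∑ j ∈ Finset.range (i + 1), (i + 1 - j) * Nat.choose (m + j) j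
      = Nat.choose (m + i + 2) i := by
  induction i with
  | zero => simp
  | succ i ih =>
      have step : ∀ j ∈ Finset.range (i + 2),
          (i + 1 + 1 - j) * Nat.choose (m + j) j
            = (i + 1 - j) * Nat.choose (m + j) j + Nat.choose (m + j) j := by
        intro j hj
        simp only [Finset.mem_range] at hj
        have : i + 1 + 1 - j = (i + 1 - j) + 1 := by omega
        rw [this, Nat.add_mul, Nat.one_mul]
      rw [Finset.sum_congr rfl step, Finset.sum_add_distrib,
        Finset.sum_range_succ (f := fun j => (i + 1 - j) * Nat.choose (m + j) j)]
      simp only [Nat.sub_self, Nat.zero_mul, Nat.add_zero]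
      rw [ih, hs2 m (i + 1),
        show m + (i + 1) + 1 = m + i + 2 by omega,
        show m + (i + 1) + 2 = (m + i + 2) + 1 by omega]
      exact (Nat.choose_succ_succ _ _).symm

theorem stmt_0 (n i : ℕ) (hn : 3 ≤ n) (hi : i ≤ n - 3) :
    1 + ∑ s ∈ Finset.Icc 1 (i + 1),
      (Nat.choose (n - s - 1) (i + 2 - s) + s * Nat.choose (n - s - 2) (i + 1 - s))
    = Nat.choose n (i + 1) := by
  obtain ⟨m, rfl⟩ : ∃ m, n = i + 3 + m := ⟨n - (i + 3), by omega⟩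
  rw [← Finset.Ico_add_one_right_eq_Icc, Finset.sum_Ico_eq_sum_range,
    show i + 1 + 1 - 1 = i + 1 by omega, ← Finset.sum_range_reflect]
  have congrstep : ∀ k ∈ Finset.range (i + 1),
      (Nat.choose (i + 3 + m - (1 + (i + 1 - 1 - k)) - 1) (i + 2 - (1 + (i + 1 - 1 - k)))
        + (1 + (i + 1 - 1 - k)) * Nat.choose (i + 3 + m - (1 + (i + 1 - 1 - k)) - 2)
            (i + 1 - (1 + (i + 1 - 1 - k))))
      = (Nat.choose (m + 1 + k) (k + 1) + (i + 1 - k) * Nat.choose (m + k) k) := by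
    intro k hk
    simp only [Finset.mem_range] at hk
    have e1 : i + 3 + m - (1 + (i + 1 - 1 - k)) - 1 = m + 1 + k := by omega
    have e2 : i + 2 - (1 + (i + 1 - 1 - k)) = k + 1 := by omega
    have e3 : i + 3 + m - (1 + (i + 1 - 1 - k)) - 2 = m + k := by omega
    have e4 : i + 1 - (1 + (i + 1 - 1 - k)) = k := by omega
    have e5 : 1 + (i + 1 - 1 - k) = i + 1 - k := by omega
    rw [e1, e2, e3, e4, e5]
  rw [Finset.sum_congr rfl congrstep, Finset.sum_add_distrib, ← Nat.add_assoc,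
    hs1 m i, L2 m i, Nat.add_comm (Nat.choose (m + i + 2) (i + 1)),
    show i + 3 + m = (m + i + 2) + 1 by omega]
  exact (Nat.choose_succ_succ _ _).symm
end

section
/- For all natural numbers n ≥ 3 and all i with 0 ≤ i ≤ n−3, the two expressions 1 + Σ_{s=1}^{i+1} ( C(n−s−1, i−s+2) + s·C(n−s−2, i−s+1) ) and Σ_{k=0}^{i+1} (i+2−k)·C(n−i−3+k, k) are equal. -/
open Finset

lemma hockey (m : ℕ) : ∀ i : ℕ, ∑ k ∈ range (i+1), Nat.choose (m+k) k = Nat.choose (m+i+1) i := by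
  intro i
  induction i with
  | zero => simp
  | succ j ih =>
    rw [sum_range_succ, ih]
    have : m + (j+1) + 1 = (m + j + 1) + 1 := by ring
    rw [this, Nat.choose_succ_succ]
    congr 2


lemma key (m i : ℕ) :
    1 + ∑ s ∈ Finset.Icc 1 (i + 1),
      (Nat.choose (m + i + 2 - s) (i + 2 - s) + s * Nat.choose (m + i + 1 - s) (i + 1 - s))
    = ∑ k ∈ Finset.range (i + 2), (i + 2 - k) * Nat.choose (m + k) k := by
  -- reindex LHS sum
  have h1 : ∑ s ∈ Finset.Icc 1 (i + 1),
      (Nat.choose (m + i + 2 - s) (i + 2 - s) + s * Nat.choose (m + i + 1 - s) (i + 1 - s))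
      = ∑ j ∈ range (i+1),
      (Nat.choose (m + 1 + j) (j + 1) + (i + 1 - j) * Nat.choose (m + j) j) := by
    apply Finset.sum_nbij' (i := fun s => i + 1 - s) (j := fun k => i + 1 - k)
    · intro a ha; simp only [Finset.mem_Icc] at ha; simp only [mem_range]; omega
    · intro a ha; simp only [mem_range] at ha; simp only [Finset.mem_Icc]; omega
    · intro a ha; simp only [Finset.mem_Icc] at ha; omega
    · intro a ha; simp only [mem_range] at ha; omega
    · intro a ha; simp only [Finset.mem_Icc] at ha
      have e1 : m + i + 2 - a = m + 1 + (i + 1 - a) := by omega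
      have e2 : i + 2 - a = (i + 1 - a) + 1 := by omega
      have e3 : m + i + 1 - a = m + (i + 1 - a) := by omega
      have e4 : a = i + 1 - (i + 1 - a) := by omega
      have e5 : i + 1 - a = i + 1 - a := rfl
      rw [e2, e1, e3]
      congr 2
  rw [h1]
  -- split RHS
  have h3 : ∑ k ∈ range (i + 2), (i + 2 - k) * Nat.choose (m + k) k
      = ∑ k ∈ range (i + 2), ((i + 1 - k) * Nat.choose (m + k) k + Nat.choose (m + k) k) := by
    apply Finset.sum_congr rfl
    intro k hk
    simp only [mem_range] at hk
    have : i + 2 - k = (i + 1 - k) + 1 := by omega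
    rw [this, add_mul, one_mul]
  have h4 : ∑ k ∈ range (i + 2), (i + 1 - k) * Nat.choose (m + k) k
      = ∑ k ∈ range (i + 1), (i + 1 - k) * Nat.choose (m + k) k := by
    rw [sum_range_succ]; simp
  have h5 : 1 + ∑ j ∈ range (i + 1), Nat.choose (m + 1 + j) (j + 1)
      = Nat.choose (m + i + 2) (i + 1) := by
    have hh := hockey m (i + 1)
    rw [Finset.sum_range_succ'] at hh
    simp only [add_zero, Nat.choose_zero_right] at hh
    have e6 : m + (i + 1) + 1 = m + i + 2 := by omega
    rw [e6] at hh
    have hs : ∑ j ∈ range (i + 1), Nat.choose (m + 1 + j) (j + 1)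
        = ∑ j ∈ range (i + 1), Nat.choose (m + (j + 1)) (j + 1) := by
      refine Finset.sum_congr rfl fun j _ => ?_
      rw [Nat.add_assoc, Nat.add_comm 1 j]
    rw [hs]
    omega
  have h6 : ∑ k ∈ range (i + 2), Nat.choose (m + k) k = Nat.choose (m + i + 2) (i + 1) := by
    have := hockey m (i + 1)
    have e7 : m + (i + 1) + 1 = m + i + 2 := by omega
    rw [e7] at this
    exact this
  have hL : ∑ j ∈ range (i + 1), (Nat.choose (m + 1 + j) (j + 1) + (i + 1 - j) * Nat.choose (m + j) j)
      = (∑ j ∈ range (i + 1), Nat.choose (m + 1 + j) (j + 1))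
        + ∑ j ∈ range (i + 1), (i + 1 - j) * Nat.choose (m + j) j := Finset.sum_add_distrib
  have hR : ∑ k ∈ range (i + 2), ((i + 1 - k) * Nat.choose (m + k) k + Nat.choose (m + k) k)
      = (∑ k ∈ range (i + 2), (i + 1 - k) * Nat.choose (m + k) k)
        + ∑ k ∈ range (i + 2), Nat.choose (m + k) k := Finset.sum_add_distrib
  rw [hL, h3, hR, h4, h6]
  omega

theorem stmt_2 (n i : ℕ) (hn : 3 ≤ n) (hi : i ≤ n - 3) :
    1 + ∑ s ∈ Finset.Icc 1 (i + 1),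
      (Nat.choose (n - s - 1) (i + 2 - s) + s * Nat.choose (n - s - 2) (i + 1 - s))
    = ∑ k ∈ Finset.range (i + 2), (i + 2 - k) * Nat.choose (n - i - 3 + k) k := by
  have hm : n = (n - i - 3) + i + 3 := by omega
  set m := n - i - 3 with hmdef
  have h1 : ∑ s ∈ Finset.Icc 1 (i + 1),
      (Nat.choose (n - s - 1) (i + 2 - s) + s * Nat.choose (n - s - 2) (i + 1 - s))
      = ∑ s ∈ Finset.Icc 1 (i + 1),
      (Nat.choose (m + i + 2 - s) (i + 2 - s) + s * Nat.choose (m + i + 1 - s) (i + 1 - s)) := by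
    apply Finset.sum_congr rfl
    intro s hs
    simp only [Finset.mem_Icc] at hs
    have e1 : n - s - 1 = m + i + 2 - s := by omega
    have e2 : n - s - 2 = m + i + 1 - s := by omega
    rw [e1, e2]
  have h2 : ∑ k ∈ Finset.range (i + 2), (i + 2 - k) * Nat.choose (n - i - 3 + k) k
      = ∑ k ∈ Finset.range (i + 2), (i + 2 - k) * Nat.choose (m + k) k := rfl
  rw [h1, h2, key]
end

section
/- Let K be a commutative ring, S a monoid, and x ∈ S an element such that x·s·x = x·s for all s ∈ S. Then for all y, w ∈ S, the element (xy − yx)·w·(xy − yx) equals 0 in the monoid algebra K[S]. -/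
open MonoidAlgebra

theorem stmt_5 (K : Type*) [CommRing K] (S : Type*) [Monoid S] (x : S)
    (hx : ∀ s : S, x * s * x = x * s) (y w : S) :
    (of K S x * of K S y - of K S y * of K S x) * of K S w *
      (of K S x * of K S y - of K S y * of K S x) = 0 := by
  have h1 : x * y * w * (x * y) = x * (y * w * y) := by
    have := hx (y * w)
    calc x * y * w * (x * y) = x * (y * w) * x * y := by simp [mul_assoc]
    _ = x * (y * w) * y := by rw [this]
    _ = x * (y * w * y) := by simp [mul_assoc]
  have h2 : x * y * w * (y * x) = x * (y * w * y) := by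
    have := hx (y * w * y)
    calc x * y * w * (y * x) = x * (y * w * y) * x := by simp [mul_assoc]
    _ = x * (y * w * y) := this
  have h3 : y * x * w * (x * y) = y * (x * w * y) := by
    have := hx w
    calc y * x * w * (x * y) = y * (x * w * x) * y := by simp [mul_assoc]
    _ = y * (x * w) * y := by rw [this]
    _ = y * (x * w * y) := by simp [mul_assoc]
  have h4 : y * x * w * (y * x) = y * (x * w * y) := by
    have := hx (w * y)
    calc y * x * w * (y * x) = y * (x * w * y * x) := by simp [mul_assoc]
    _ = y * (x * (w * y) * x) := by simp [mul_assoc]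
    _ = y * (x * (w * y)) := by rw [this]
    _ = y * (x * w * y) := by simp [mul_assoc]
  simp only [sub_mul, mul_sub, ← map_mul, h1, h2, h3, h4]
  exact sub_self _
end

section
/- Let Θ be a finite simple oriented graph with vertex set {1,…,n} in which some vertex i has no incoming arrows (a source). Then in the Hecke–Kiselman monoid HK_Θ, the generator x_i satisfies x_i · w · x_i = x_i · w for every element w ∈ HK_Θ. -/
/-- If `i` is a source (no incoming arrows) of a finite simple oriented graph
`E` on `{1,…,n}`, then in the Hecke–Kiselman monoid of the graph one has
`x_i * w * x_i = x_i * w` for every element `w`.  This is formalized via the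
universal property: the identity holds in every monoid generated by elements
`x_1,…,x_n` satisfying the Hecke–Kiselman relations of the graph. -/
theorem stmt_11 (n : ℕ) (E : Fin n → Fin n → Prop)
    (hsimple₁ : ∀ v, ¬ E v v) (hsimple₂ : ∀ u v, E u v → ¬ E v u)
    (M : Type*) [Monoid M] (x : Fin n → M)
    (hidem : ∀ j, x j * x j = x j)
    (hcomm : ∀ a b, ¬ E a b → ¬ E b a → x a * x b = x b * x a)
    (harrow : ∀ a b, E a b →
      x a * x b * x a = x a * x b ∧ x b * x a * x b = x a * x b)
    (i : Fin n) (hsource : ∀ j, ¬ E j i) :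
    ∀ w ∈ Submonoid.closure (Set.range x), x i * w * x i = x i * w := by
  -- key lemma: the identity for products over index lists, by left induction
  have key : ∀ l : List (Fin n),
      x i * (l.map x).prod * x i = x i * (l.map x).prod := by
    intro l
    induction l with
    | nil => simp [hidem]
    | cons j t ih =>
      set P := (t.map x).prod with hP
      simp only [List.map_cons, List.prod_cons]
      by_cases hj : j = i
      · subst hj
        calc x j * (x j * P) * x j = x j * P * x j := by
              rw [← mul_assoc, hidem]
          _ = x j * P := ih
          _ = x j * (x j * P) := by rw [← mul_assoc, hidem]
      · by_cases hij : E i j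
        · have h1 : x i * x j * x i = x i * x j := (harrow i j hij).1
          calc x i * (x j * P) * x i
              = x i * x j * P * x i := by rw [← mul_assoc (x i) (x j)]
            _ = (x i * x j * x i) * P * x i := by rw [h1]
            _ = x i * x j * (x i * P * x i) := by simp only [mul_assoc]
            _ = x i * x j * (x i * P) := by rw [ih]
            _ = (x i * x j * x i) * P := by simp only [mul_assoc]
            _ = x i * x j * P := by rw [h1]
            _ = x i * (x j * P) := by rw [mul_assoc]
        · have hji : ¬ E j i := hsource j
          have hc : x i * x j = x j * x i := hcomm i j hij hji
          calc x i * (x j * P) * x i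
              = (x i * x j) * P * x i := by rw [← mul_assoc (x i) (x j)]
            _ = (x j * x i) * P * x i := by rw [hc]
            _ = x j * (x i * P * x i) := by simp only [mul_assoc]
            _ = x j * (x i * P) := by rw [ih]
            _ = (x j * x i) * P := by simp only [mul_assoc]
            _ = (x i * x j) * P := by rw [hc]
            _ = x i * (x j * P) := by rw [mul_assoc]
  intro w hw
  -- every element of the closure is a product over an index list
  have hlist : ∃ l : List (Fin n), (l.map x).prod = w := by
    induction hw using Submonoid.closure_induction with
    | mem y hy =>
      obtain ⟨j, rfl⟩ := hy
      exact ⟨[j], by simp⟩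
    | one => exact ⟨[], by simp⟩
    | mul a b _ _ iha ihb =>
      obtain ⟨la, rfl⟩ := iha
      obtain ⟨lb, rfl⟩ := ihb
      exact ⟨la ++ lb, by simp⟩
  obtain ⟨l, rfl⟩ := hlist
  exact key l
end

section
/- Let Θ be a finite simple oriented graph with a vertex i that has no outgoing arrows (a sink). Then in the Hecke–Kiselman monoid HK_Θ, the generator x_i satisfies x_i · w · x_i = w · x_i for every element w ∈ HK_Θ. -/
/-- If `i` is a sink (no outgoing arrows) of a finite simple oriented graph
`E`, then in the Hecke–Kiselman monoid of the graph one has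
`x_i * w * x_i = w * x_i` for every element `w`; formalized via the universal
property of the presented monoid. -/
theorem stmt_12 (n : ℕ) (E : Fin n → Fin n → Prop)
    (hsimple₁ : ∀ v, ¬ E v v) (hsimple₂ : ∀ u v, E u v → ¬ E v u)
    (M : Type*) [Monoid M] (x : Fin n → M)
    (hidem : ∀ j, x j * x j = x j)
    (hcomm : ∀ a b, ¬ E a b → ¬ E b a → x a * x b = x b * x a)
    (harrow : ∀ a b, E a b →
      x a * x b * x a = x a * x b ∧ x b * x a * x b = x a * x b)
    (i : Fin n) (hsink : ∀ j, ¬ E i j) :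
    ∀ w ∈ Submonoid.closure (Set.range x), x i * w * x i = w * x i := by
  intro w hw
  induction hw using Submonoid.closure_induction with
  | mem g hg =>
    obtain ⟨j, rfl⟩ := hg
    by_cases hji : E j i
    · exact (harrow j i hji).2
    · rw [hcomm i j (hsink j) hji, mul_assoc, hidem i]
  | one => rw [mul_one, one_mul, hidem]
  | mul a b ha hb iha ihb =>
    calc x i * (a * b) * x i = x i * a * (b * x i) := by simp [mul_assoc]
      _ = x i * a * (x i * b * x i) := by rw [ihb]
      _ = (x i * a * x i) * (b * x i) := by simp [mul_assoc]
      _ = (a * x i) * (b * x i) := by rw [iha]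
      _ = a * (x i * b * x i) := by simp [mul_assoc]
      _ = a * (b * x i) := by rw [ihb]
      _ = a * b * x i := by rw [mul_assoc]
end
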